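/- arXiv:2312.05573 — 2 statements merged into one kernel-verified Lean document; each statement's English description precedes it below -/
import Mathlib

section
/- For all real numbers α, β, parameter γ ∈ [0,1), and all t ∈ [0,1], the quantity |α − βt| / √(1 + t² − 2γt) is at most √3 · max(|α|, |β|, |β−α|/√(2(1−γ))). -/
/-!
Writing `α - β t = (1 - t) α + t (α - β)` and `1 + t² - 2γt = (1 - t)² + κ t` with `κ = 2(1 - γ)`,
the triangle inequality and a weighted Cauchy–Schwarz inequality bound `(α - β t)²` by
`(α² + (β - α)²/κ) ((1 - t)² + κ t²) ≤ 2 m² (1 + t² - 2γt)`, where `m = max |α| (|β - α| / √κ)`.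
So the claim holds even with `√2` in place of `√3`.
-/

theorem sq_mul_add_mul_le {κ : ℝ} (hκ : 0 < κ) (a c x y : ℝ) :
    (a * x + c * y) ^ 2 ≤ (a ^ 2 + c ^ 2 / κ) * (x ^ 2 + κ * y ^ 2) := by
  have h : κ * (a * x + c * y) ^ 2 ≤ (κ * a ^ 2 + c ^ 2) * (x ^ 2 + κ * y ^ 2) := by
    nlinarith [sq_nonneg (κ * a * y - c * x)]
  have hsum : a ^ 2 + c ^ 2 / κ = (κ * a ^ 2 + c ^ 2) / κ := by field_simp
  rwa [hsum, div_mul_eq_mul_div, le_div_iff₀' hκ]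

theorem abs_sub_mul_le_of_mem_Icc {α β t : ℝ} (ht0 : 0 ≤ t) (ht1 : t ≤ 1) :
    |α - β * t| ≤ |α| * (1 - t) + |β - α| * t := by
  calc |α - β * t| = |α * (1 - t) + (α - β) * t| := by ring_nf
    _ ≤ |α * (1 - t)| + |(α - β) * t| := abs_add_le _ _
    _ = |α| * (1 - t) + |β - α| * t := by
      rw [abs_mul, abs_mul, abs_of_nonneg (sub_nonneg.2 ht1), abs_of_nonneg ht0, abs_sub_comm α β]

theorem abs_sub_mul_le_sqrt_two_mul_max {α β κ t : ℝ} (hκ : 0 < κ) (ht0 : 0 ≤ t) (ht1 : t ≤ 1) :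
    |α - β * t| ≤
      Real.sqrt 2 * max |α| (|β - α| / Real.sqrt κ) * Real.sqrt ((1 - t) ^ 2 + κ * t) := by
  set m := max |α| (|β - α| / Real.sqrt κ)
  have hα : |α| ^ 2 ≤ m ^ 2 := pow_le_pow_left₀ (abs_nonneg _) (le_max_left _ _) 2
  have hβα : |β - α| ^ 2 / κ ≤ m ^ 2 := by
    rw [← Real.sq_sqrt hκ.le, ← div_pow]
    exact pow_le_pow_left₀ (by positivity) (le_max_right _ _) 2
  have hsq : (α - β * t) ^ 2 ≤ 2 * m ^ 2 * ((1 - t) ^ 2 + κ * t) :=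
    calc (α - β * t) ^ 2 = |α - β * t| ^ 2 := (sq_abs _).symm
      _ ≤ (|α| * (1 - t) + |β - α| * t) ^ 2 :=
        pow_le_pow_left₀ (abs_nonneg _) (abs_sub_mul_le_of_mem_Icc ht0 ht1) 2
      _ ≤ (|α| ^ 2 + |β - α| ^ 2 / κ) * ((1 - t) ^ 2 + κ * t ^ 2) := sq_mul_add_mul_le hκ _ _ _ _
      _ ≤ (m ^ 2 + m ^ 2) * ((1 - t) ^ 2 + κ * t) := by
        have ht2 : t ^ 2 ≤ t := by nlinarith
        gcongr
      _ = 2 * m ^ 2 * ((1 - t) ^ 2 + κ * t) := by ring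
  have hm : 0 ≤ m := (abs_nonneg α).trans (le_max_left _ _)
  calc |α - β * t| ≤ Real.sqrt (2 * m ^ 2 * ((1 - t) ^ 2 + κ * t)) := Real.abs_le_sqrt hsq
    _ = Real.sqrt 2 * m * Real.sqrt ((1 - t) ^ 2 + κ * t) := by
      rw [Real.sqrt_mul (by positivity), Real.sqrt_mul zero_le_two, Real.sqrt_sq hm]

theorem stmt_0_general (α β γ t : ℝ) (hγ1 : γ < 1)
    (ht0 : 0 ≤ t) (ht1 : t ≤ 1) :
    |α - β * t| / Real.sqrt (1 + t ^ 2 - 2 * γ * t) ≤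
      Real.sqrt 3 * max (max |α| |β|) (|β - α| / Real.sqrt (2 * (1 - γ))) := by
  have hκ : 0 < 2 * (1 - γ) := by linarith
  have hD : 1 + t ^ 2 - 2 * γ * t = (1 - t) ^ 2 + 2 * (1 - γ) * t := by ring
  have hDpos : 0 < (1 - t) ^ 2 + 2 * (1 - γ) * t := by
    nlinarith [sq_nonneg (1 - t - (1 - γ)), mul_nonneg ht0 hκ.le, mul_nonneg ht0 (sub_nonneg.2 ht1)]
  rw [hD, div_le_iff₀ (Real.sqrt_pos.2 hDpos)]
  refine (abs_sub_mul_le_sqrt_two_mul_max hκ ht0 ht1).trans ?_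
  gcongr
  · norm_num
  · exact le_max_left _ _

theorem stmt_0 (α β γ t : ℝ) (hγ0 : 0 ≤ γ) (hγ1 : γ < 1)
    (ht0 : 0 ≤ t) (ht1 : t ≤ 1) :
    |α - β * t| / Real.sqrt (1 + t ^ 2 - 2 * γ * t) ≤
      Real.sqrt 3 * max (max |α| |β|) (|β - α| / Real.sqrt (2 * (1 - γ))) :=
  stmt_0_general α β γ t hγ1 ht0 ht1
end

section
/- Let a,b,c,d ∈ ℝ and e,f ∈ [0,1), and define h(u,v) = (a − bu − cv + duv) / (√(1+u²−2eu) · √(1+v²−2fv)). Then for all (u,v) ∈ [0,1]², |h(u,v)| ≤ 3 · max(|a|, |b|, |c|, |d|, |b−a|/√(1−e), |d−c|/√(1−e), |d−b|/√(1−f), |c−a|/√(1−f), |a−b−c+d|/(√(1−e)·√(1−f))). -/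
/-!
Write the numerator as the bilinear interpolation
`a (1-u)(1-v) + (a-b) u(1-v) + (a-c) (1-u)v + (a-b-c+d) uv`. With `s = √(1-e)`, `t = √(1-f)` and `M`
the maximum on the right, the four coefficients are bounded by `M`, `M s`, `M t`, `M s t`, so the
numerator is at most `M (1-u+su)(1-v+tv)`. By Cauchy–Schwarz and `u² ≤ u`,
`(1-u+su)² ≤ 2((1-u)² + (1-e)u²) ≤ 2(1+u²-2eu)`, and likewise in `v`; hence `|h| ≤ 2M`.
-/

lemma one_add_sq_sub_two_mul_pos {e u : ℝ} (he : e < 1) (hu : 0 ≤ u) :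
    0 < 1 + u ^ 2 - 2 * e * u := by
  rcases hu.eq_or_lt with rfl | hu
  · norm_num
  · nlinarith [sq_nonneg (1 - u), mul_pos hu (sub_pos.2 he)]

lemma one_sub_add_sqrt_mul_le {e u : ℝ} (he : e < 1) (hu0 : 0 ≤ u) (hu1 : u ≤ 1) :
    1 - u + √(1 - e) * u ≤ √2 * √(1 + u ^ 2 - 2 * e * u) := by
  rw [← Real.sqrt_mul zero_le_two]
  apply Real.le_sqrt_of_sq_le
  have hs : √(1 - e) ^ 2 = 1 - e := Real.sq_sqrt (sub_pos.2 he).le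
  nlinarith [sq_nonneg (1 - u - √(1 - e) * u),
    mul_nonneg (mul_nonneg hu0 (by linarith : 0 ≤ 2 - u)) (sub_pos.2 he).le]

lemma abs_bilinear_le {a b c d s t M u v : ℝ}
    (hu0 : 0 ≤ u) (hu1 : u ≤ 1) (hv0 : 0 ≤ v) (hv1 : v ≤ 1)
    (ha : |a| ≤ M) (hb : |b - a| ≤ M * s) (hc : |c - a| ≤ M * t)
    (hd : |a - b - c + d| ≤ M * (s * t)) :
    |a - b * u - c * v + d * u * v| ≤ M * ((1 - u + s * u) * (1 - v + t * v)) := by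
  have weighted {x K w : ℝ} (hw : 0 ≤ w) (hx : |x| ≤ K) : |x * w| ≤ K * w := by
    rw [abs_mul, abs_of_nonneg hw]
    exact mul_le_mul_of_nonneg_right hx hw
  rw [abs_sub_comm] at hb hc
  calc |a - b * u - c * v + d * u * v|
      = |a * ((1 - u) * (1 - v)) + (a - b) * (u * (1 - v)) + (a - c) * ((1 - u) * v)
          + (a - b - c + d) * (u * v)| := by congr 1; ring
    _ ≤ |a * ((1 - u) * (1 - v))| + |(a - b) * (u * (1 - v))| + |(a - c) * ((1 - u) * v)|
          + |(a - b - c + d) * (u * v)| :=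
        (abs_add_le _ _).trans (add_le_add (abs_add_three _ _ _) le_rfl)
    _ ≤ M * ((1 - u) * (1 - v)) + M * s * (u * (1 - v)) + M * t * ((1 - u) * v)
          + M * (s * t) * (u * v) := by
        gcongr ?_ + ?_ + ?_ + ?_ <;> apply weighted _ ‹_› <;> positivity
    _ = M * ((1 - u + s * u) * (1 - v + t * v)) := by ring

theorem stmt_1_general (a b c d e f : ℝ) (he1 : e < 1)
    (hf1 : f < 1) (u v : ℝ)
    (hu0 : 0 ≤ u) (hu1 : u ≤ 1) (hv0 : 0 ≤ v) (hv1 : v ≤ 1) :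
    |(a - b * u - c * v + d * u * v) /
        (Real.sqrt (1 + u ^ 2 - 2 * e * u) * Real.sqrt (1 + v ^ 2 - 2 * f * v))| ≤
      3 * max |a| (max |b| (max |c| (max |d|
        (max (|b - a| / Real.sqrt (1 - e)) (max (|d - c| / Real.sqrt (1 - e))
        (max (|d - b| / Real.sqrt (1 - f)) (max (|c - a| / Real.sqrt (1 - f))
          (|a - b - c + d| / (Real.sqrt (1 - e) * Real.sqrt (1 - f)))))))))) := by
  have hs : 0 < √(1 - e) := Real.sqrt_pos.2 (sub_pos.2 he1)
  have ht : 0 < √(1 - f) := Real.sqrt_pos.2 (sub_pos.2 hf1)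
  set M := max |a| (max |b| (max |c| (max |d|
        (max (|b - a| / √(1 - e)) (max (|d - c| / √(1 - e))
        (max (|d - b| / √(1 - f)) (max (|c - a| / √(1 - f))
          (|a - b - c + d| / (√(1 - e) * √(1 - f))))))))))
  obtain ⟨ha, hb, hc, hd⟩ : |a| ≤ M ∧ |b - a| / √(1 - e) ≤ M ∧ |c - a| / √(1 - f) ≤ M ∧
      |a - b - c + d| / (√(1 - e) * √(1 - f)) ≤ M := by
    simp only [M, le_max_iff, le_refl, or_true, true_or, and_self]
  have hnum := abs_bilinear_le hu0 hu1 hv0 hv1 ha ((div_le_iff₀ hs).1 hb)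
    ((div_le_iff₀ ht).1 hc) ((div_le_iff₀ (mul_pos hs ht)).1 hd)
  have hden : 0 < √(1 + u ^ 2 - 2 * e * u) * √(1 + v ^ 2 - 2 * f * v) :=
    mul_pos (Real.sqrt_pos.2 (one_add_sq_sub_two_mul_pos he1 hu0))
      (Real.sqrt_pos.2 (one_add_sq_sub_two_mul_pos hf1 hv0))
  have hM : 0 ≤ M := (abs_nonneg a).trans ha
  rw [abs_div, abs_of_pos hden, div_le_iff₀ hden]
  calc |a - b * u - c * v + d * u * v|
      ≤ M * ((1 - u + √(1 - e) * u) * (1 - v + √(1 - f) * v)) := hnum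
    _ ≤ M * ((√2 * √(1 + u ^ 2 - 2 * e * u)) * (√2 * √(1 + v ^ 2 - 2 * f * v))) := by
        refine mul_le_mul_of_nonneg_left (mul_le_mul (one_sub_add_sqrt_mul_le he1 hu0 hu1)
          (one_sub_add_sqrt_mul_le hf1 hv0 hv1) ?_ (by positivity)) hM
        linarith [mul_nonneg ht.le hv0]
    _ = 2 * M * (√(1 + u ^ 2 - 2 * e * u) * √(1 + v ^ 2 - 2 * f * v)) := by
        rw [mul_mul_mul_comm, Real.mul_self_sqrt zero_le_two]; ring
    _ ≤ 3 * M * (√(1 + u ^ 2 - 2 * e * u) * √(1 + v ^ 2 - 2 * f * v)) := by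
        gcongr
        norm_num

theorem stmt_1 (a b c d e f : ℝ) (he0 : 0 ≤ e) (he1 : e < 1)
    (hf0 : 0 ≤ f) (hf1 : f < 1) (u v : ℝ)
    (hu0 : 0 ≤ u) (hu1 : u ≤ 1) (hv0 : 0 ≤ v) (hv1 : v ≤ 1) :
    |(a - b * u - c * v + d * u * v) /
        (Real.sqrt (1 + u ^ 2 - 2 * e * u) * Real.sqrt (1 + v ^ 2 - 2 * f * v))| ≤
      3 * max |a| (max |b| (max |c| (max |d|
        (max (|b - a| / Real.sqrt (1 - e)) (max (|d - c| / Real.sqrt (1 - e))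
        (max (|d - b| / Real.sqrt (1 - f)) (max (|c - a| / Real.sqrt (1 - f))
          (|a - b - c + d| / (Real.sqrt (1 - e) * Real.sqrt (1 - f)))))))))) :=
  stmt_1_general a b c d e f he1 hf1 u v hu0 hu1 hv0 hv1
end
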